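/- Let m, n ≥ 1 and let 𝓛 be the first-order language with two unary relation symbols P, L and one binary relation symbol I. There exists an 𝓛-theory T such that for every 𝓛-structure M, M is a model of T if and only if M is a K_{m,n}-free incidence structure that is existentially closed (among K_{m,n}-free incidence structures). -/

import Mathlib

open FirstOrder FirstOrder.Language

universe u v

/-- Relation symbols of the language of incidence structures: two unary symbols
(`pt` for "point", `lin` for "line") and one binary symbol (`inc` for "incidence"). -/
inductive IncRel : ℕ → Type
  | pt : IncRel 1
  | lin : IncRel 1
  | inc : IncRel 2

/-- The first-order language `{P, L, I}` of incidence structures. -/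
def IncLang : FirstOrder.Language := ⟨fun _ => Empty, IncRel⟩

section
variable {M : Type u} [IncLang.Structure M]

/-- `x` is a point. -/
def ptL (x : M) : Prop := Structure.RelMap (L := IncLang) IncRel.pt ![x]

/-- `x` is a line. -/
def lnL (x : M) : Prop := Structure.RelMap (L := IncLang) IncRel.lin ![x]

/-- `x` is incident to `y`. -/
def incL (x y : M) : Prop := Structure.RelMap (L := IncLang) IncRel.inc ![x, y]

end

/-- `M` is an incidence structure: points and lines partition the domain, and
incidence only holds between a point and a line. -/
def IsIncidenceL (M : Type u) [IncLang.Structure M] : Prop :=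
  (∀ x : M, ptL x ∨ lnL x) ∧ (∀ x : M, ¬(ptL x ∧ lnL x)) ∧
    ∀ x y : M, incL x y → ptL x ∧ lnL y

/-- `M` is `K_{m,n}`-free: there are no `m` pairwise distinct points and `n` pairwise
distinct lines with every one of the points incident to every one of the lines. -/
def KFreeL (m n : ℕ) (M : Type u) [IncLang.Structure M] : Prop :=
  ¬∃ (a : Fin m → M) (b : Fin n → M),
      Function.Injective a ∧ Function.Injective b ∧
      (∀ i, ptL (a i)) ∧ (∀ j, lnL (b j)) ∧ ∀ i j, incL (a i) (b j)

/-- `M` is an existentially closed `K_{m,n}`-free incidence structure: `M` is a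
`K_{m,n}`-free incidence structure, and for every `K_{m,n}`-free incidence structure
`N` containing `M` as an induced substructure (i.e. admitting an embedding of `M`),
every existential formula `∃ ȳ φ(ā, ȳ)` (with `φ` quantifier-free and parameters `ā`
from `M`) that holds in `N` also holds in `M`. -/
def IsECL (m n : ℕ) (M : Type u) [IncLang.Structure M] : Prop :=
  IsIncidenceL M ∧ KFreeL m n M ∧
    ∀ (N : Type u) [IncLang.Structure N], IsIncidenceL N → KFreeL m n N →
      ∀ (f : M ↪[IncLang] N) (k : ℕ) (φ : IncLang.BoundedFormula M k), φ.IsQF →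
        (∃ xs : Fin k → N, φ.Realize (f : M → N) xs) →
          ∃ xs : Fin k → M, φ.Realize (id : M → M) xs

/-!
Axiomatise the class by the incidence axioms, `K_{m,n}`-freeness, and one extension axiom for
every finite `K_{m,n}`-free incidence structure `C` on `old ⊕ new`: every `a` realising the atomic
diagram of the old part and satisfying the gluing conditions extends to a realisation of all
of `C`. The gluing conditions are first order in `a` and make the free amalgam of `M` and `C`
over `a` (new elements meet `M` only inside the image of `a`) `K_{m,n}`-free: a `K_{m,n}` there
lies in `M`, or lies in `C`, or has new points but all its lines in the image of `a` (or
dually), and the last case is excluded by bounding the number of points of `M` on those lines.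

So an existentially closed `M` satisfies every extension axiom, realised in the amalgam.
Conversely, if a quantifier-free formula over `M` has witnesses in an extension `N`, its
parameters and witnesses span a finite substructure `C` of `N` whose old part lies in `M`; the
extension axiom for `C` embeds it into `M` over the old part, and quantifier-free formulas
transfer between tuples with the same atomic type.
-/

noncomputable section

open Function Finset
open scoped Classical

namespace FirstOrder.Language.BoundedFormula

variable {L : Language} {α β : Type*} {n : ℕ}

theorem IsQF.iInf [Finite β] {f : β → L.BoundedFormula α n} (h : ∀ b, (f b).IsQF) :
    (iInf f).IsQF := by
  let := Fintype.ofFinite β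
  simp only [BoundedFormula.iInf]
  induction (Finset.univ : Finset β).toList with
  | nil => exact IsQF.top
  | cons b l ih => exact (h b).inf ih

theorem IsQF.restrictFreeVar [DecidableEq α] {φ : L.BoundedFormula α n} (hφ : φ.IsQF)
    (f : φ.freeVarFinset → β) : (φ.restrictFreeVar f).IsQF := by
  induction hφ with
  | falsum => exact isQF_bot
  | of_isAtomic hA =>
    cases hA with
    | equal => exact (IsAtomic.equal _ _).isQF
    | rel => exact (IsAtomic.rel _ _).isQF
  | imp _ _ ih₁ ih₂ => exact (ih₁ _).imp (ih₂ _)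

end FirstOrder.Language.BoundedFormula

theorem Finset.exists_injective_fin_of_le_card {X : Type*} {s : Finset X} {r : ℕ}
    (h : r ≤ #s) : ∃ z : Fin r → X, Injective z ∧ ∀ i, z i ∈ s :=
  ⟨fun i => s.equivFin.symm (Fin.castLE h i),
    fun _ _ hii => Fin.castLE_injective h (s.equivFin.symm.injective (Subtype.ext hii)),
    fun _ => (s.equivFin.symm _).2⟩

theorem exists_enumeration_old_new {X Y : Type*} {f : X → Y} (hf : Injective f) {s : Set X}
    (hs : s.Finite) {k : ℕ} (xs : Fin k → Y) :
    ∃ (j k' : ℕ) (a : Fin j → X) (b : Fin k' → Y), Injective (Sum.elim (f ∘ a) b) ∧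
      (∀ t, b t ∉ Set.range f) ∧ (∀ x ∈ s, ∃ l, a l = x) ∧
      ∀ i, ∃ u, Sum.elim (f ∘ a) b u = xs i := by
  obtain ⟨j, a, ha⟩ := (hs.union ((Set.finite_range xs).preimage hf.injOn)).fin_embedding
  obtain ⟨k', b, hb⟩ := ((Set.finite_range xs).sdiff (t := Set.range f)).fin_embedding
  have hb_new : ∀ t, b t ∉ Set.range f := fun t => by
    have h := Set.mem_range_self (f := b) t
    rw [hb] at h
    exact h.2
  refine ⟨j, k', a, b,
    (hf.comp a.injective).sumElim b.injective fun l t h => hb_new t ⟨a l, h⟩, hb_new, fun x hx => (ha ▸ Or.inl hx : x ∈ Set.range a), fun i => ?_⟩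
  by_cases hi : xs i ∈ Set.range f
  · obtain ⟨x, hx⟩ := hi
    obtain ⟨l, rfl⟩ : x ∈ Set.range a := ha ▸ Or.inr ⟨i, hx.symm⟩
    exact ⟨Sum.inl l, hx⟩
  · obtain ⟨t, ht⟩ : xs i ∈ Set.range b := hb ▸ ⟨⟨i, rfl⟩, hi⟩
    exact ⟨Sum.inr t, ht⟩

namespace IncLang

section Atoms

variable {M : Type u} {N : Type v} [IncLang.Structure M] [IncLang.Structure N] {γ δ : Type*}

lemma term_eq_var (t : IncLang.Term γ) : ∃ x, t = Term.var x := by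
  cases t with
  | var x => exact ⟨x, rfl⟩
  | func f _ => exact Empty.elim f

structure SameAtoms (v : γ → M) (w : γ → N) : Prop where
  eq_iff : ∀ x y, v x = v y ↔ w x = w y
  pt_iff : ∀ x, ptL (v x) ↔ ptL (w x)
  ln_iff : ∀ x, lnL (v x) ↔ lnL (w x)
  inc_iff : ∀ x y, incL (v x) (v y) ↔ incL (w x) (w y)

namespace SameAtoms

variable {v : γ → M} {w : γ → N}

theorem symm (h : SameAtoms v w) : SameAtoms w v :=
  ⟨fun x y => (h.eq_iff x y).symm, fun x => (h.pt_iff x).symm, fun x => (h.ln_iff x).symm,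
    fun x y => (h.inc_iff x y).symm⟩

theorem trans {P : Type*} [IncLang.Structure P] {w' : γ → P} (h : SameAtoms v w)
    (h' : SameAtoms w w') : SameAtoms v w' :=
  ⟨fun x y => (h.eq_iff x y).trans (h'.eq_iff x y), fun x => (h.pt_iff x).trans (h'.pt_iff x),
    fun x => (h.ln_iff x).trans (h'.ln_iff x),
    fun x y => (h.inc_iff x y).trans (h'.inc_iff x y)⟩

theorem comp (h : SameAtoms v w) (g : δ → γ) : SameAtoms (v ∘ g) (w ∘ g) :=
  ⟨fun x y => h.eq_iff (g x) (g y), fun x => h.pt_iff (g x), fun x => h.ln_iff (g x),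
    fun x y => h.inc_iff (g x) (g y)⟩

theorem injective_iff (h : SameAtoms v w) : Injective v ↔ Injective w :=
  ⟨fun hv x y hxy => hv ((h.eq_iff x y).2 hxy), fun hw x y hxy => hw ((h.eq_iff x y).1 hxy)⟩

theorem relMap_iff (h : SameAtoms v w) {l : ℕ} (R : IncRel l) (xs : Fin l → γ) :
    Structure.RelMap (L := IncLang) R (v ∘ xs) ↔
      Structure.RelMap (L := IncLang) R (w ∘ xs) := by
  cases R <;> rw [← FinVec.etaExpand_eq (v ∘ xs), ← FinVec.etaExpand_eq (w ∘ xs)]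
  exacts [h.pt_iff (xs 0), h.ln_iff (xs 0), h.inc_iff (xs 0) (xs 1)]

theorem realize_iff {k : ℕ} {φ : IncLang.BoundedFormula γ k} (hφ : φ.IsQF) {v : γ → M}
    {xs : Fin k → M} {w : γ → N} {ys : Fin k → N}
    (h : SameAtoms (Sum.elim v xs) (Sum.elim w ys)) :
    φ.Realize v xs ↔ φ.Realize w ys := by
  induction hφ with
  | falsum => rfl
  | of_isAtomic hA =>
    cases hA with
    | equal t₁ t₂ =>
      obtain ⟨x, rfl⟩ := term_eq_var t₁
      obtain ⟨y, rfl⟩ := term_eq_var t₂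
      exact h.eq_iff x y
    | rel R ts =>
      choose xs hxs using fun i => term_eq_var (ts i)
      obtain rfl : ts = fun i => Term.var (xs i) := funext hxs
      exact h.relMap_iff R xs
  | imp _ _ ih₁ ih₂ => simp only [BoundedFormula.realize_imp, ih₁, ih₂]

end SameAtoms

theorem SameAtoms.embedding_comp (e : M ↪[IncLang] N) (v : γ → M) : SameAtoms (e ∘ v) v where
  eq_iff x y := e.injective.eq_iff
  pt_iff x := by
    have h := e.map_rel IncRel.pt ![v x]
    rwa [← FinVec.etaExpand_eq (e ∘ _)] at h
  ln_iff x := by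
    have h := e.map_rel IncRel.lin ![v x]
    rwa [← FinVec.etaExpand_eq (e ∘ _)] at h
  inc_iff x y := by
    have h := e.map_rel IncRel.inc ![v x, v y]
    rwa [← FinVec.etaExpand_eq (e ∘ _)] at h

def IsBiclique {m n : ℕ} (A : Fin m → M) (B : Fin n → M) : Prop :=
  Injective A ∧ Injective B ∧ (∀ i, ptL (A i)) ∧ (∀ j, lnL (B j)) ∧
    ∀ i j, incL (A i) (B j)

theorem SameAtoms.isBiclique_iff {v : γ → M} {w : γ → N} (h : SameAtoms v w) {m n : ℕ}
    (P : Fin m → γ) (Q : Fin n → γ) :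
    IsBiclique (v ∘ P) (v ∘ Q) ↔ IsBiclique (w ∘ P) (w ∘ Q) := by
  simp only [IsBiclique, (h.comp P).injective_iff, (h.comp Q).injective_iff, comp_apply,
    h.pt_iff, h.ln_iff, h.inc_iff]

variable {m n : ℕ}

theorem _root_.KFreeL.of_embedding (e : M ↪[IncLang] N) (hN : KFreeL m n N) :
    KFreeL m n M := fun ⟨A, B, hAB⟩ =>
  hN ⟨e ∘ A, e ∘ B, ((SameAtoms.embedding_comp e id).isBiclique_iff A B).2 hAB⟩

theorem _root_.IsIncidenceL.of_embedding (e : M ↪[IncLang] N) (hN : IsIncidenceL N) :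
    IsIncidenceL M := by
  have h := SameAtoms.embedding_comp e id
  exact ⟨fun x => (hN.1 (e x)).imp (h.pt_iff x).1 (h.ln_iff x).1,
    fun x hx => hN.2.1 (e x) ⟨(h.pt_iff x).2 hx.1, (h.ln_iff x).2 hx.2⟩,
    fun x y hxy => (hN.2.2 _ _ ((h.inc_iff x y).2 hxy)).imp (h.pt_iff x).1 (h.ln_iff y).1⟩

theorem _root_.KFreeL.card_lt_of_commonPoints (hN : KFreeL m n N) {B : Fin n → N}
    (hB : Injective B) (hBln : ∀ j, lnL (B j)) {S : Finset N}
    (hS : ∀ x ∈ S, ptL x ∧ ∀ j, incL x (B j)) : #S < m := by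
  by_contra! h
  obtain ⟨A, hA, hAS⟩ := exists_injective_fin_of_le_card h
  exact hN ⟨A, B, hA, hB, fun i => (hS _ (hAS i)).1, hBln, fun i => (hS _ (hAS i)).2⟩

theorem _root_.KFreeL.card_lt_of_commonLines (hN : KFreeL m n N) {A : Fin m → N}
    (hA : Injective A) (hApt : ∀ i, ptL (A i)) {S : Finset N}
    (hS : ∀ y ∈ S, lnL y ∧ ∀ i, incL (A i) y) : #S < n := by
  by_contra! h
  obtain ⟨B, hB, hBS⟩ := exists_injective_fin_of_le_card h
  exact hN ⟨A, B, hA, hB, hApt, fun j => (hS _ (hBS j)).1, fun i j => (hS _ (hBS j)).2 i⟩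

abbrev comapStructure (E : γ → N) : IncLang.Structure γ where
  funMap f := Empty.elim f
  RelMap r xs := Structure.RelMap r (E ∘ xs)

def comapEmbedding (E : γ → N) (hE : Injective E) :
    letI := comapStructure E
    γ ↪[IncLang] N :=
  letI := comapStructure E
  { toFun := E, inj' := hE, map_fun' := fun f => Empty.elim f, map_rel' := fun _ _ => Iff.rfl }

theorem realize_iff_of_sameAtoms {k : ℕ} {φ : IncLang.BoundedFormula M k} (hφ : φ.IsQF)
    {g : M → N} {V : γ → M} {W : γ → N} (h : SameAtoms V W) (idx : Fin k → γ)
    (hpar : ∀ x ∈ φ.freeVarFinset, ∃ u, V u = x ∧ W u = g x) :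
    φ.Realize id (V ∘ idx) ↔ φ.Realize g (W ∘ idx) := by
  choose p hpV hpW using fun x : φ.freeVarFinset => hpar x x.2
  rw [← BoundedFormula.realize_restrictFreeVar (f := p) id hpV,
    ← BoundedFormula.realize_restrictFreeVar (f := p) g hpW]
  have h' := h.comp (Sum.elim id idx)
  rw [Sum.comp_elim, Sum.comp_elim, comp_id, comp_id] at h'
  exact SameAtoms.realize_iff (hφ.restrictFreeVar p) h'

end Atoms

section Formulas

variable {M : Type u} [IncLang.Structure M] {α β : Type*}

def ptF (x : α) : IncLang.Formula α := Relations.formula₁ (L := IncLang) IncRel.pt (Term.var x)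

def lnF (x : α) : IncLang.Formula α := Relations.formula₁ (L := IncLang) IncRel.lin (Term.var x)

def incF (x y : α) : IncLang.Formula α :=
  Relations.formula₂ (L := IncLang) IncRel.inc (Term.var x) (Term.var y)

@[simp] theorem realize_ptF {v : α → M} {x : α} : (ptF x).Realize v ↔ ptL (v x) :=
  Formula.realize_rel₁

@[simp] theorem realize_lnF {v : α → M} {x : α} : (lnF x).Realize v ↔ lnL (v x) :=
  Formula.realize_rel₁

@[simp] theorem realize_incF {v : α → M} {x y : α} :
    (incF x y).Realize v ↔ incL (v x) (v y) :=
  Formula.realize_rel₂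

def lit (p : Prop) (φ : IncLang.Formula α) : IncLang.Formula α := if p then φ else φ.not

@[simp] theorem realize_lit {p : Prop} {φ : IncLang.Formula α} {v : α → M} :
    (lit p φ).Realize v ↔ (φ.Realize v ↔ p) := by
  unfold lit
  split_ifs with hp <;> simp [hp]

theorem isQF_lit {p : Prop} {φ : IncLang.Formula α} (hφ : φ.IsQF) : (lit p φ).IsQF := by
  unfold lit
  split_ifs
  exacts [hφ, hφ.not]

def atomicDiagram [Finite α] {C : Type*} [IncLang.Structure C] (w : α → C) :
    IncLang.Formula α :=
  (Formula.iInf fun p : α × α => lit (w p.1 = w p.2) ((Term.var p.1).equal (Term.var p.2))) ⊓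
    ((Formula.iInf fun x => lit (ptL (w x)) (ptF x)) ⊓
      ((Formula.iInf fun x => lit (lnL (w x)) (lnF x)) ⊓
        Formula.iInf fun p : α × α => lit (incL (w p.1) (w p.2)) (incF p.1 p.2)))

theorem realize_atomicDiagram [Finite α] {C : Type*} [IncLang.Structure C] {w : α → C}
    {v : α → M} :
    (atomicDiagram w).Realize v ↔ SameAtoms v w := by
  simp only [atomicDiagram, Formula.realize_inf, Formula.realize_iInf, realize_lit,
    Formula.realize_equal, Term.realize_var, realize_ptF, realize_lnF, realize_incF, Prod.forall]
  exact ⟨fun ⟨h₁, h₂, h₃, h₄⟩ => ⟨h₁, h₂, h₃, h₄⟩,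
    fun ⟨h₁, h₂, h₃, h₄⟩ => ⟨h₁, h₂, h₃, h₄⟩⟩

theorem isQF_atomicDiagram [Finite α] {C : Type*} [IncLang.Structure C] (w : α → C) :
    (atomicDiagram w).IsQF :=
  (BoundedFormula.IsQF.iInf fun _ => isQF_lit (BoundedFormula.IsAtomic.equal _ _).isQF).inf <|
    (BoundedFormula.IsQF.iInf fun _ => isQF_lit (BoundedFormula.IsAtomic.rel _ _).isQF).inf <|
      (BoundedFormula.IsQF.iInf fun _ => isQF_lit (BoundedFormula.IsAtomic.rel _ _).isQF).inf <|
        BoundedFormula.IsQF.iInf fun _ => isQF_lit (BoundedFormula.IsAtomic.rel _ _).isQF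

def injectiveF [Finite β] (A : β → α) : IncLang.Formula α :=
  Formula.iInf fun p : β × β => lit (p.1 = p.2) ((Term.var (A p.1)).equal (Term.var (A p.2)))

theorem realize_injectiveF [Finite β] {A : β → α} {v : α → M} :
    (injectiveF A).Realize v ↔ Injective (v ∘ A) := by
  simp only [injectiveF, Formula.realize_iInf, realize_lit, Formula.realize_equal,
    Term.realize_var, Prod.forall]
  exact ⟨fun h x y hxy => (h x y).1 hxy, fun h x y => h.eq_iff⟩

def bicliqueF {m n : ℕ} (A : Fin m → α) (B : Fin n → α) : IncLang.Formula α :=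
  injectiveF A ⊓ (injectiveF B ⊓ ((Formula.iInf fun i => ptF (A i)) ⊓
    ((Formula.iInf fun j => lnF (B j)) ⊓
      Formula.iInf fun p : Fin m × Fin n => incF (A p.1) (B p.2))))

theorem realize_bicliqueF {m n : ℕ} {A : Fin m → α} {B : Fin n → α} {v : α → M} :
    (bicliqueF A B).Realize v ↔ IsBiclique (v ∘ A) (v ∘ B) := by
  simp only [bicliqueF, Formula.realize_inf, realize_injectiveF, Formula.realize_iInf,
    realize_ptF, realize_lnF, realize_incF, Prod.forall]
  rfl

def incidenceAxiom : IncLang.Sentence :=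
  Formula.iAlls (Fin 2) <| Formula.relabel Sum.inr <|
    (ptF 0 ⊔ lnF 0) ⊓ ((ptF 0 ⊓ lnF 0).not ⊓ (incF 0 1).imp (ptF 0 ⊓ lnF 1))

theorem model_incidenceAxiom : M ⊨ incidenceAxiom ↔ IsIncidenceL M := by
  simp only [Sentence.Realize, incidenceAxiom, Formula.realize_iAlls, Formula.realize_relabel,
    Formula.realize_inf, Formula.realize_sup, Formula.realize_not, Formula.realize_imp,
    realize_ptF, realize_lnF, realize_incF, comp_apply, Sum.elim_inr]
  exact ⟨fun h => ⟨fun x => (h ![x, x]).1, fun x => (h ![x, x]).2.1,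
      fun x y => (h ![x, y]).2.2⟩,
    fun h v => ⟨h.1 _, h.2.1 _, h.2.2 _ _⟩⟩

def kFreeAxiom (m n : ℕ) : IncLang.Sentence :=
  (Formula.iExs (Fin m ⊕ Fin n) (Formula.relabel Sum.inr (bicliqueF Sum.inl Sum.inr))).not

theorem model_kFreeAxiom {m n : ℕ} : M ⊨ kFreeAxiom m n ↔ KFreeL m n M := by
  simp only [Sentence.Realize, kFreeAxiom, Formula.realize_not, Formula.realize_iExs,
    Formula.realize_relabel, realize_bicliqueF]
  exact not_congr
    ⟨fun ⟨v, hv⟩ => ⟨_, _, hv⟩, fun ⟨A, B, hAB⟩ => ⟨Sum.elim A B, hAB⟩⟩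

end Formulas

section Gluing

variable {m n : ℕ} {M : Type u} [IncLang.Structure M] {ι κ : Type*} [Fintype κ]
  [IncLang.Structure (ι ⊕ κ)]

variable (κ) in
def newCommonPoints (L : Fin n → ι) : Finset κ :=
  {t | ptL (Sum.inr t : ι ⊕ κ) ∧ ∀ i, incL (Sum.inr t : ι ⊕ κ) (Sum.inl (L i))}

variable (κ) in
def newCommonLines (P : Fin m → ι) : Finset κ :=
  {t | lnL (Sum.inr t : ι ⊕ κ) ∧ ∀ i, incL (Sum.inl (P i) : ι ⊕ κ) (Sum.inr t)}

variable (m n κ) in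
/-- A `K_{m,n}` of the amalgam whose lines `a ∘ L` are all old consists of new points on all of
`L` and at least `m - #(newCommonPoints κ L)` points of `M`; dually for old points. -/
def Gluable (a : ι → M) : Prop :=
  (∀ L : Fin n → ι, Injective L → (∀ i, lnL (Sum.inl (L i) : ι ⊕ κ)) →
    ∀ z : Fin (m - #(newCommonPoints κ L)) → M, ¬IsBiclique z (a ∘ L)) ∧
  (∀ P : Fin m → ι, Injective P → (∀ i, ptL (Sum.inl (P i) : ι ⊕ κ)) →
    ∀ z : Fin (n - #(newCommonLines κ P)) → M, ¬IsBiclique (a ∘ P) z)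

variable [Finite ι]

variable (m n κ) in
def gluableF : IncLang.Formula ι :=
  (Formula.iInf fun L :
      {L : Fin n → ι // Injective L ∧ ∀ i, lnL (Sum.inl (L i) : ι ⊕ κ)} =>
    (Formula.iExs (Fin (m - #(newCommonPoints κ L.1)))
      (bicliqueF Sum.inr (Sum.inl ∘ L.1))).not) ⊓
  Formula.iInf fun P :
      {P : Fin m → ι // Injective P ∧ ∀ i, ptL (Sum.inl (P i) : ι ⊕ κ)} =>
    (Formula.iExs (Fin (n - #(newCommonLines κ P.1)))
      (bicliqueF (Sum.inl ∘ P.1) Sum.inr)).not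

theorem realize_gluableF {a : ι → M} : (gluableF m n κ).Realize a ↔ Gluable m n κ a := by
  simp only [gluableF, Formula.realize_inf, Formula.realize_iInf, Formula.realize_not,
    Formula.realize_iExs, realize_bicliqueF, Subtype.forall, not_exists, Gluable, and_imp]
  rfl

variable (m n ι κ) in
def extensionAxiom : IncLang.Sentence :=
  Formula.iAlls ι <| Formula.relabel Sum.inr <|
    (atomicDiagram (Sum.inl : ι → ι ⊕ κ) ⊓ gluableF m n κ).imp
      (Formula.iExs κ (atomicDiagram (id : ι ⊕ κ → ι ⊕ κ)))

theorem model_extensionAxiom :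
    M ⊨ extensionAxiom m n ι κ ↔
      ∀ a : ι → M, SameAtoms a (Sum.inl : ι → ι ⊕ κ) → Gluable m n κ a →
      ∃ b : κ → M, SameAtoms (Sum.elim a b) id := by
  simp only [Sentence.Realize, extensionAxiom, Formula.realize_iAlls, Formula.realize_relabel,
    Formula.realize_imp, Formula.realize_inf, Formula.realize_iExs, realize_atomicDiagram,
    realize_gluableF, and_imp]
  rfl

end Gluing

section Theory

variable {m n : ℕ} {M : Type u} [IncLang.Structure M]

variable (m n M) in
def HasExtensionProperty : Prop :=
  ∀ (j k : ℕ) [IncLang.Structure (Fin j ⊕ Fin k)], IsIncidenceL (Fin j ⊕ Fin k) →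
    KFreeL m n (Fin j ⊕ Fin k) →
      ∀ a : Fin j → M, SameAtoms a (Sum.inl : Fin j → Fin j ⊕ Fin k) →
      Gluable m n (Fin k) a → ∃ b : Fin k → M, SameAtoms (Sum.elim a b) id

variable (m n) in
def ecTheory : IncLang.Theory :=
  {incidenceAxiom, kFreeAxiom m n} ∪
    {φ | ∃ (j k : ℕ) (C : IncLang.Structure (Fin j ⊕ Fin k)), letI := C
      IsIncidenceL (Fin j ⊕ Fin k) ∧ KFreeL m n (Fin j ⊕ Fin k) ∧
        φ = extensionAxiom m n (Fin j) (Fin k)}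

theorem model_ecTheory_iff :
    M ⊨ ecTheory m n ↔ IsIncidenceL M ∧ KFreeL m n M ∧ HasExtensionProperty m n M := by
  simp only [Theory.model_iff, ecTheory, Set.mem_union, Set.mem_insert_iff,
    Set.mem_singleton_iff, Set.mem_ofPred_eq]
  constructor
  · intro h
    exact ⟨model_incidenceAxiom.1 (h _ (Or.inl (Or.inl rfl))),
      model_kFreeAxiom.1 (h _ (Or.inl (Or.inr rfl))),
      fun j k C hI hK => model_extensionAxiom.1 (h _ (Or.inr ⟨j, k, C, hI, hK, rfl⟩))⟩
  · rintro ⟨hI, hK, hE⟩ φ ((rfl | rfl) | ⟨j, k, C, hCI, hCK, rfl⟩)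
    exacts [model_incidenceAxiom.2 hI, model_kFreeAxiom.2 hK,
      model_extensionAxiom.2 (hE j k hCI hCK)]

end Theory

section Amalgam

variable {m n : ℕ} {M : Type u} {ι κ : Type*}

variable (κ) in
inductive Amalgam (a : ι → M)
  | old : M → Amalgam a
  | new : κ → Amalgam a

namespace Amalgam

variable {a : ι → M}

theorem eq_old_of_forall_ne_new {z : Amalgam κ a} (hz : ∀ t, z ≠ new t) :
    ∃ x, z = old x := by
  cases z with
  | old x => exact ⟨x, rfl⟩
  | new t => exact absurd rfl (hz t)

theorem exists_injective_old {r : ℕ} {A : Fin r → Amalgam κ a} (hA : Injective A)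
    {T : Finset κ} (hT : ∀ i t, A i = new t → t ∈ T) :
    ∃ z : Fin (r - #T) → M, Injective z ∧ ∀ s, ∃ i, A i = old (z s) := by
  let S : Finset M := (univ.image A).preimage old (Injective.injOn fun _ _ h => old.inj h)
  have hS : ∀ x, x ∈ S ↔ ∃ i, A i = old x := fun x => by simp [S]
  have hcard : r ≤ #S + #T :=
    calc r = #(univ.image A) := by rw [card_image_of_injective _ hA, card_fin]
      _ ≤ #(S.image old ∪ T.image new) := by
        refine card_le_card fun z hz => ?_
        obtain ⟨i, -, rfl⟩ := mem_image.1 hz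
        cases h : A i with
        | old x => exact mem_union_left _ (mem_image_of_mem _ ((hS x).2 ⟨i, h⟩))
        | new t => exact mem_union_right _ (mem_image_of_mem _ (hT i t h))
      _ ≤ #S + #T := (card_union_le _ _).trans (add_le_add card_image_le card_image_le)
  obtain ⟨z, hz, hzS⟩ := exists_injective_fin_of_le_card (r := r - #T) (s := S) (by omega)
  exact ⟨z, hz, fun s => (hS _).1 (hzS s)⟩

variable [IncLang.Structure M] [IncLang.Structure (ι ⊕ κ)]

variable (a) in
def IsPt : Amalgam κ a → Prop
  | old x => ptL x
  | new t => ptL (Sum.inr t : ι ⊕ κ)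

variable (a) in
def IsLn : Amalgam κ a → Prop
  | old x => lnL x
  | new t => lnL (Sum.inr t : ι ⊕ κ)

variable (a) in
def Inc : Amalgam κ a → Amalgam κ a → Prop
  | old x, old y => incL x y
  | old x, new t => ∃ l, a l = x ∧ incL (Sum.inl l : ι ⊕ κ) (Sum.inr t)
  | new t, old y => ∃ l, a l = y ∧ incL (Sum.inr t : ι ⊕ κ) (Sum.inl l)
  | new t, new t' => incL (Sum.inr t : ι ⊕ κ) (Sum.inr t')

instance : IncLang.Structure (Amalgam κ a) where
  funMap f := Empty.elim f
  RelMap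
    | .pt, xs => IsPt a (xs 0)
    | .lin, xs => IsLn a (xs 0)
    | .inc, xs => Inc a (xs 0) (xs 1)

variable (a) in
def embedding : M ↪[IncLang] Amalgam κ a where
  toFun := old
  inj' _ _ h := old.inj h
  map_fun' f := Empty.elim f
  map_rel' r xs := by
    cases r <;> (conv_rhs => rw [← FinVec.etaExpand_eq xs]) <;> rfl

variable (a) in
def glue : ι ⊕ κ → Amalgam κ a := Sum.elim (old ∘ a) new

theorem exists_glue_of_inc_new {z : Amalgam κ a} {t : κ} (h : incL z (new t)) :
    ∃ u, z = glue a u := by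
  cases z with
  | old x => obtain ⟨l, rfl, -⟩ := h; exact ⟨Sum.inl l, rfl⟩
  | new t' => exact ⟨Sum.inr t', rfl⟩

theorem exists_glue_of_new_inc {w : Amalgam κ a} {t : κ} (h : incL (new t) w) :
    ∃ u, w = glue a u := by
  cases w with
  | old y => obtain ⟨l, rfl, -⟩ := h; exact ⟨Sum.inl l, rfl⟩
  | new t' => exact ⟨Sum.inr t', rfl⟩

theorem sameAtoms_glue (ha : SameAtoms a (Sum.inl : ι → ι ⊕ κ)) :
    SameAtoms (glue a) (id : ι ⊕ κ → ι ⊕ κ) := by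
  have ha_inj : Injective a := ha.injective_iff.2 Sum.inl_injective
  refine ⟨fun u v => ?_, fun u => ?_, fun u => ?_, fun u v => ?_⟩
  · rcases u with l | t <;> rcases v with l' | t' <;> simp [glue, ha.eq_iff]
  · rcases u with l | t
    exacts [ha.pt_iff l, Iff.rfl]
  · rcases u with l | t
    exacts [ha.ln_iff l, Iff.rfl]
  · rcases u with l | t <;> rcases v with l' | t'
    · exact ha.inc_iff l l'
    · exact ⟨fun ⟨l'', hl, h⟩ => ha_inj hl ▸ h, fun h => ⟨l, rfl, h⟩⟩
    · exact ⟨fun ⟨l'', hl, h⟩ => ha_inj hl ▸ h, fun h => ⟨l', rfl, h⟩⟩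
    · exact Iff.rfl

theorem isIncidenceL (hM : IsIncidenceL M) (hC : IsIncidenceL (ι ⊕ κ))
    (ha : SameAtoms a (Sum.inl : ι → ι ⊕ κ)) : IsIncidenceL (Amalgam κ a) := by
  have hglue := sameAtoms_glue ha
  refine ⟨fun z => ?_, fun z => ?_, fun z w hzw => ?_⟩
  · cases z
    exacts [hM.1 _, hC.1 _]
  · cases z
    exacts [hM.2.1 _, hC.2.1 _]
  · rcases z with x | t
    · rcases w with y | t
      · exact hM.2.2 x y hzw
      · obtain ⟨u, hu⟩ := exists_glue_of_inc_new hzw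
        rw [hu] at hzw ⊢
        exact (hC.2.2 _ _ ((hglue.inc_iff u (.inr t)).1 hzw)).imp
          (hglue.pt_iff u).2 (hglue.ln_iff (.inr t)).2
    · obtain ⟨u, hu⟩ := exists_glue_of_new_inc hzw
      rw [hu] at hzw ⊢
      exact (hC.2.2 _ _ ((hglue.inc_iff (.inr t) u).1 hzw)).imp
        (hglue.pt_iff (.inr t)).2 (hglue.ln_iff u).2

variable {A : Fin m → Amalgam κ a} {B : Fin n → Amalgam κ a}

theorem not_isBiclique_of_old_points_of_old_lines (hM : KFreeL m n M)
    (hA : ∀ i, ∃ x, A i = old x) (hB : ∀ j, ∃ y, B j = old y) : ¬IsBiclique A B := by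
  intro hAB
  choose P hP using hA
  choose Q hQ using hB
  rw [show A = embedding a ∘ P from funext hP, show B = embedding a ∘ Q from funext hQ] at hAB
  exact hM ⟨P, Q, ((SameAtoms.embedding_comp (embedding a) id).isBiclique_iff P Q).1 hAB⟩

theorem not_isBiclique_of_new_point_of_new_line (hC : KFreeL m n (ι ⊕ κ))
    (ha : SameAtoms a (Sum.inl : ι → ι ⊕ κ)) {i₀ : Fin m} {j₀ : Fin n} {t₀ t₁ : κ}
    (hi₀ : A i₀ = new t₀) (hj₀ : B j₀ = new t₁) : ¬IsBiclique A B := by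
  intro hAB
  have hP : ∀ i, ∃ u, A i = glue a u := fun i =>
    exists_glue_of_inc_new (hj₀ ▸ hAB.2.2.2.2 i j₀)
  have hQ : ∀ j, ∃ u, B j = glue a u := fun j =>
    exists_glue_of_new_inc (hi₀ ▸ hAB.2.2.2.2 i₀ j)
  choose P hP using hP
  choose Q hQ using hQ
  rw [show A = glue a ∘ P from funext hP, show B = glue a ∘ Q from funext hQ] at hAB
  exact hC ⟨P, Q, ((sameAtoms_glue ha).isBiclique_iff P Q).1 hAB⟩

variable [Fintype κ]

theorem not_isBiclique_of_new_point_of_old_lines (ha : SameAtoms a (Sum.inl : ι → ι ⊕ κ))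
    (hg : Gluable m n κ a) {i₀ : Fin m} {t₀ : κ} (hi₀ : A i₀ = new t₀)
    (hB : ∀ j, ∃ y, B j = old y) : ¬IsBiclique A B := by
  rintro ⟨hAinj, hBinj, hApt, hBln, hinc⟩
  have ha_inj : Injective a := ha.injective_iff.2 Sum.inl_injective
  have hL : ∀ j, ∃ l, B j = old (a l) := fun j => by
    obtain ⟨y, hy⟩ := hB j
    have h := hinc i₀ j
    rw [hi₀, hy] at h
    obtain ⟨l, rfl, -⟩ := h
    exact ⟨l, hy⟩
  choose L hL using hL
  have hLinj : Injective L := fun j j' h => hBinj (by rw [hL, hL, h])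
  have hLln : ∀ j, lnL (a (L j)) := fun j => by
    have h := hBln j
    rwa [hL] at h
  have hT : ∀ i t, A i = new t → t ∈ newCommonPoints κ L := fun i t ht => by
    have hpt := hApt i
    rw [ht] at hpt
    refine mem_filter.2 ⟨mem_univ _, hpt, fun j => ?_⟩
    have h := hinc i j
    rw [ht, hL] at h
    obtain ⟨l, hl, h⟩ := h
    rwa [← ha_inj hl]
  obtain ⟨z, hz, hzA⟩ := exists_injective_old hAinj hT
  refine hg.1 L hLinj (fun j => (ha.ln_iff _).1 (hLln j)) z
    ⟨hz, ha_inj.comp hLinj, fun s => ?_, hLln, fun s j => ?_⟩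
  · obtain ⟨i, hi⟩ := hzA s
    have h := hApt i
    rwa [hi] at h
  · obtain ⟨i, hi⟩ := hzA s
    have h := hinc i j
    rwa [hi, hL] at h

theorem not_isBiclique_of_new_line_of_old_points (ha : SameAtoms a (Sum.inl : ι → ι ⊕ κ))
    (hg : Gluable m n κ a) {j₀ : Fin n} {t₀ : κ} (hj₀ : B j₀ = new t₀)
    (hA : ∀ i, ∃ x, A i = old x) : ¬IsBiclique A B := by
  rintro ⟨hAinj, hBinj, hApt, hBln, hinc⟩
  have ha_inj : Injective a := ha.injective_iff.2 Sum.inl_injective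
  have hP : ∀ i, ∃ l, A i = old (a l) := fun i => by
    obtain ⟨x, hx⟩ := hA i
    have h := hinc i j₀
    rw [hx, hj₀] at h
    obtain ⟨l, rfl, -⟩ := h
    exact ⟨l, hx⟩
  choose P hP using hP
  have hPinj : Injective P := fun i i' h => hAinj (by rw [hP, hP, h])
  have hPpt : ∀ i, ptL (a (P i)) := fun i => by
    have h := hApt i
    rwa [hP] at h
  have hT : ∀ j t, B j = new t → t ∈ newCommonLines κ P := fun j t ht => by
    have hln := hBln j
    rw [ht] at hln
    refine mem_filter.2 ⟨mem_univ _, hln, fun i => ?_⟩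
    have h := hinc i j
    rw [ht, hP] at h
    obtain ⟨l, hl, h⟩ := h
    rwa [← ha_inj hl]
  obtain ⟨z, hz, hzB⟩ := exists_injective_old hBinj hT
  refine hg.2 P hPinj (fun i => (ha.pt_iff _).1 (hPpt i)) z
    ⟨ha_inj.comp hPinj, hz, hPpt, fun s => ?_, fun i s => ?_⟩
  · obtain ⟨j, hj⟩ := hzB s
    have h := hBln j
    rwa [hj] at h
  · obtain ⟨j, hj⟩ := hzB s
    have h := hinc i j
    rwa [hP, hj] at h

theorem kFreeL (hM : KFreeL m n M) (hC : KFreeL m n (ι ⊕ κ))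
    (ha : SameAtoms a (Sum.inl : ι → ι ⊕ κ)) (hg : Gluable m n κ a) :
    KFreeL m n (Amalgam κ a) := by
  rintro ⟨A, B, hAB⟩
  by_cases hA : ∃ i t, A i = new t <;> by_cases hB : ∃ j t, B j = new t
  · obtain ⟨i, t, hi⟩ := hA
    obtain ⟨j, t', hj⟩ := hB
    exact not_isBiclique_of_new_point_of_new_line hC ha hi hj hAB
  · obtain ⟨i, t, hi⟩ := hA
    simp only [not_exists] at hB
    exact not_isBiclique_of_new_point_of_old_lines ha hg hi
      (fun j => eq_old_of_forall_ne_new (hB j)) hAB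
  · obtain ⟨j, t, hj⟩ := hB
    simp only [not_exists] at hA
    exact not_isBiclique_of_new_line_of_old_points ha hg hj
      (fun i => eq_old_of_forall_ne_new (hA i)) hAB
  · simp only [not_exists] at hA hB
    exact not_isBiclique_of_old_points_of_old_lines hM (fun i => eq_old_of_forall_ne_new (hA i))
      (fun j => eq_old_of_forall_ne_new (hB j)) hAB

end Amalgam

variable [IncLang.Structure M]

theorem _root_.IsECL.hasExtensionProperty (hM : IsECL m n M) : HasExtensionProperty m n M := by
  intro j k _ hCI hCK a ha hg
  let glued : IncLang.BoundedFormula M k :=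
    BoundedFormula.relabel (Sum.elim (Sum.inl ∘ a) Sum.inr)
      (atomicDiagram (id : Fin j ⊕ Fin k → Fin j ⊕ Fin k))
  have hglued {P : Type u} [IncLang.Structure P] (v : M → P) (ys : Fin k → P) :
      glued.Realize v ys ↔ SameAtoms (Sum.elim (v ∘ a) ys) id := by
    have hv : Sum.elim v (ys ∘ Fin.castAdd 0) ∘ Sum.elim (Sum.inl ∘ a) Sum.inr =
        Sum.elim (v ∘ a) ys := by
      ext (l | t) <;> rfl
    rw [BoundedFormula.realize_relabel, Formula.boundedFormula_realize_eq_realize,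
      realize_atomicDiagram, hv]
  obtain ⟨b, hb⟩ := hM.2.2 (Amalgam (Fin k) a) (Amalgam.isIncidenceL hM.1 hCI ha)
    (Amalgam.kFreeL hM.2.1 hCK ha hg) (Amalgam.embedding a) k glued
    ((isQF_atomicDiagram _).relabel _) ⟨Amalgam.new, (hglued _ _).2 (Amalgam.sameAtoms_glue ha)⟩
  exact ⟨b, (hglued _ _).1 hb⟩

end Amalgam

section ExistentiallyClosed

variable {m n : ℕ} {M : Type u} {N : Type v} [IncLang.Structure M] [IncLang.Structure N]

theorem gluable_of_sameAtoms {ι κ : Type*} [Fintype κ] [IncLang.Structure (ι ⊕ κ)]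
    (hN : KFreeL m n N) (f : M ↪[IncLang] N) {a : ι → M} {E : ι ⊕ κ → N}
    (hE : SameAtoms E id) (hEa : ∀ l, E (Sum.inl l) = f (a l))
    (hEnew : ∀ t, E (Sum.inr t) ∉ Set.range f) :
    Gluable m n κ a := by
  have hf := SameAtoms.embedding_comp f id
  have hEinj : Injective (E ∘ Sum.inr) := (hE.injective_iff.2 injective_id).comp Sum.inr_injective
  have hdisj {r : ℕ} (z : Fin r → M) (T : Finset κ) :
      Disjoint (univ.image (f ∘ z)) (T.image (E ∘ Sum.inr)) := by
    refine disjoint_left.2 fun x hx₁ hx₂ => ?_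
    obtain ⟨s, -, rfl⟩ := mem_image.1 hx₁
    obtain ⟨t, -, ht⟩ := mem_image.1 hx₂
    exact hEnew t ⟨z s, ht.symm⟩
  refine ⟨fun L _ _ z hz => ?_, fun P _ _ z hz => ?_⟩
  · have hcard := hN.card_lt_of_commonPoints (B := f ∘ a ∘ L) (f.injective.comp hz.2.1)
      (fun j => (hf.ln_iff _).2 (hz.2.2.2.1 j))
      (S := univ.image (f ∘ z) ∪ (newCommonPoints κ L).image (E ∘ Sum.inr))
      (by
        simp only [mem_union, mem_image, mem_univ, true_and]
        rintro _ (⟨s, rfl⟩ | ⟨t, ht, rfl⟩)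
        · exact ⟨(hf.pt_iff _).2 (hz.2.2.1 s), fun j => (hf.inc_iff _ _).2 (hz.2.2.2.2 s j)⟩
        · obtain ⟨-, htpt, htinc⟩ := mem_filter.1 ht
          exact ⟨(hE.pt_iff _).2 htpt, fun j => by
            simpa only [comp_apply, hEa] using (hE.inc_iff _ _).2 (htinc j)⟩)
    rw [card_union_of_disjoint (hdisj z _), card_image_of_injective _ (f.injective.comp hz.1),
      card_image_of_injective _ hEinj, card_univ, Fintype.card_fin] at hcard
    omega
  · have hcard := hN.card_lt_of_commonLines (A := f ∘ a ∘ P) (f.injective.comp hz.1)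
      (fun i => (hf.pt_iff _).2 (hz.2.2.1 i))
      (S := univ.image (f ∘ z) ∪ (newCommonLines κ P).image (E ∘ Sum.inr))
      (by
        simp only [mem_union, mem_image, mem_univ, true_and]
        rintro _ (⟨s, rfl⟩ | ⟨t, ht, rfl⟩)
        · exact ⟨(hf.ln_iff _).2 (hz.2.2.2.1 s), fun i => (hf.inc_iff _ _).2 (hz.2.2.2.2 i s)⟩
        · obtain ⟨-, htln, htinc⟩ := mem_filter.1 ht
          exact ⟨(hE.ln_iff _).2 htln, fun i => by
            simpa only [comp_apply, hEa] using (hE.inc_iff _ _).2 (htinc i)⟩)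
    rw [card_union_of_disjoint (hdisj z _), card_image_of_injective _ (f.injective.comp hz.2.1),
      card_image_of_injective _ hEinj, card_univ, Fintype.card_fin] at hcard
    omega

theorem _root_.IsECL.of_hasExtensionProperty (hI : IsIncidenceL M) (hK : KFreeL m n M)
    (hE : HasExtensionProperty m n M) : IsECL m n M := by
  refine ⟨hI, hK, fun N _ hNI hNK f k φ hφ ⟨xs, hxs⟩ => ?_⟩
  obtain ⟨j, k', a, b, hEinj, hb_new, ha, hidx⟩ :=
    exists_enumeration_old_new f.injective φ.freeVarFinset.finite_toSet xs
  let E : Fin j ⊕ Fin k' → N := Sum.elim (f ∘ a) b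
  let _ := comapStructure E
  have hEC : SameAtoms E id := SameAtoms.embedding_comp (comapEmbedding E hEinj) id
  obtain ⟨c, hc⟩ := hE j k' (hNI.of_embedding (comapEmbedding E hEinj))
    (hNK.of_embedding (comapEmbedding E hEinj)) a
    ((SameAtoms.embedding_comp f a).symm.trans (hEC.comp Sum.inl))
    (gluable_of_sameAtoms hNK f hEC (fun _ => rfl) hb_new)
  choose idx hidx using hidx
  refine ⟨Sum.elim a c ∘ idx,
    (realize_iff_of_sameAtoms (g := f) hφ (hc.trans hEC.symm) idx fun x hx => ?_).2 ?_⟩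
  · obtain ⟨l, rfl⟩ := ha x hx
    exact ⟨Sum.inl l, rfl, rfl⟩
  · rwa [show E ∘ idx = xs from funext hidx]

end ExistentiallyClosed

end IncLang

end

theorem statement_2_general (m n : ℕ) :
    ∃ T : IncLang.Theory, ∀ (M : Type u) [IncLang.Structure M],
      M ⊨ T ↔ IsECL m n M := by
  refine ⟨IncLang.ecTheory m n, fun M _ => IncLang.model_ecTheory_iff.trans ⟨?_, ?_⟩⟩
  · rintro ⟨hI, hK, hE⟩
    exact .of_hasExtensionProperty hI hK hE
  · intro h
    exact ⟨h.1, h.2.1, h.hasExtensionProperty⟩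

/-- There is an `𝓛`-theory whose models are exactly the existentially closed
`K_{m,n}`-free incidence structures. -/
theorem statement_2 (m n : ℕ) (hm : 1 ≤ m) (hn : 1 ≤ n) :
    ∃ T : IncLang.Theory, ∀ (M : Type u) [IncLang.Structure M],
      M ⊨ T ↔ IsECL m n M :=
  statement_2_general m n
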